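/- The group G with presentation ⟨a, b | a^3 = b^3 = (ab)^3 = (ab^2)^3 = 1⟩ is finite; in fact it is isomorphic to the free Burnside group B(2,3) of exponent 3 on two generators, and has order 27. -/
import Mathlib

/-! ### The Heisenberg group of order 27 -/

structure Hsn27 where
  x : ZMod 3
  y : ZMod 3
  z : ZMod 3
deriving DecidableEq, Fintype

namespace Hsn27

instance : Mul Hsn27 := ⟨fun p q => ⟨p.x + q.x, p.y + q.y, p.z + q.z + p.y * q.x⟩⟩
instance : One Hsn27 := ⟨⟨0, 0, 0⟩⟩
instance : Inv Hsn27 := ⟨fun p => ⟨-p.x, -p.y, -p.z + p.y * p.x⟩⟩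

lemma mul_def (p q : Hsn27) : p * q = ⟨p.x + q.x, p.y + q.y, p.z + q.z + p.y * q.x⟩ := rfl
lemma one_def : (1 : Hsn27) = ⟨0, 0, 0⟩ := rfl
lemma inv_def (p : Hsn27) : p⁻¹ = ⟨-p.x, -p.y, -p.z + p.y * p.x⟩ := rfl

instance : Group Hsn27 where
  mul_assoc p q r := by simp only [mul_def, mk.injEq]; refine ⟨by ring, by ring, by ring⟩
  one_mul p := by simp [mul_def, one_def]
  mul_one p := by simp [mul_def, one_def]
  inv_mul_cancel p := by
    simp only [mul_def, inv_def, one_def, mk.injEq]; refine ⟨by ring, by ring, by ring⟩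

lemma exp3 : ∀ p : Hsn27, p ^ 3 = 1 := by decide

lemma card27 : Nat.card Hsn27 = 27 := by
  simp only [Nat.card_eq_fintype_card]; rfl

end Hsn27

/-! ### Consequences of the relations `a³ = b³ = (ab)³ = (ab²)³ = 1` in an abstract group -/

section Relations

variable {G : Type*} [Group G] (a b : G)

lemma step_h3' (hab : a*b*a*b*a*b = 1) : b*a*b = a⁻¹*b⁻¹*a⁻¹ := by
  have h : b*a*b = a⁻¹*(a*b*a*b*a*b)*(b⁻¹*a⁻¹) := by group
  rw [h, hab]; group

lemma step_h4' (hb : b*b*b = 1) (hab2 : a*b*b*a*b*b*a*b*b = 1) : b⁻¹*a*b⁻¹ = a⁻¹*b*a⁻¹ := by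
  have h : b⁻¹*a*b⁻¹ = (b*b*b)⁻¹ * a⁻¹ * (a*b*b*a*b*b*a*b*b) * (b*b*b)⁻¹ * b * a⁻¹ * (b*b*b)⁻¹ := by
    group
  rw [h, hab2, hb]; group

lemma step_h5 (hb : b*b*b = 1) (hab : a*b*a*b*a*b = 1) : b*a*b⁻¹ = a⁻¹*b⁻¹*a⁻¹*b := by
  have h : b*a*b⁻¹ = (b*a*b)*(b*b*b)⁻¹*b := by group
  rw [h, step_h3' a b hab, hb]; group

lemma step_h6 (hb : b*b*b = 1) (hab2 : a*b*b*a*b*b*a*b*b = 1) : b⁻¹*a*b = a⁻¹*b*a⁻¹*b⁻¹ := by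
  have h : b⁻¹*a*b = (b⁻¹*a*b⁻¹)*(b*b*b)*b⁻¹ := by group
  rw [h, step_h4' a b hb hab2, hb]; group

lemma step_formA (ha : a*a*a = 1) (hb : b*b*b = 1) (hab : a*b*a*b*a*b = 1)
    (hab2 : a*b*b*a*b*b*a*b*b = 1) :
    b⁻¹*a⁻¹*b*a = a⁻¹*b⁻¹*a⁻¹*b*a⁻¹ := by
  have h1 : b⁻¹*a⁻¹*b*a = (b⁻¹*a*b)⁻¹ * a := by group
  rw [h1, step_h6 a b hb hab2]
  have h2 : (a⁻¹*b*a⁻¹*b⁻¹)⁻¹ * a = (b*a*b⁻¹) * a * a := by group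
  rw [h2, step_h5 a b hb hab]
  have h3 : a⁻¹*b⁻¹*a⁻¹*b * a * a = a⁻¹*b⁻¹*a⁻¹*b*a⁻¹*(a*a*a) := by group
  rw [h3, ha]; group

lemma step_formB (ha : a*a*a = 1) (hb : b*b*b = 1) (hab : a*b*a*b*a*b = 1)
    (hab2 : a*b*b*a*b*b*a*b*b = 1) :
    b⁻¹*a⁻¹*b*a = a⁻¹*b*a*b⁻¹ := by
  have hba : b*a = a⁻¹*b⁻¹*a⁻¹*b⁻¹ := by
    have h : b*a = (b*a*b)*b⁻¹ := by group
    rw [h, step_h3' a b hab]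
  have e1 : b⁻¹*a⁻¹*b*a = b⁻¹*a⁻¹*(b*a) := by group
  rw [e1, hba]
  have e2 : b⁻¹*a⁻¹*(a⁻¹*b⁻¹*a⁻¹*b⁻¹) = b⁻¹*(a*a*a)⁻¹*(a*(b⁻¹*a⁻¹*b⁻¹)) := by group
  rw [e2, ha]
  have e3 : b⁻¹*(1:G)⁻¹*(a*(b⁻¹*a⁻¹*b⁻¹)) = (b⁻¹*a*b⁻¹)*(a⁻¹*b⁻¹) := by group
  rw [e3, step_h4' a b hb hab2]
  have e4 : (a⁻¹*b*a⁻¹)*(a⁻¹*b⁻¹) = a⁻¹*b*a*(a*a*a)⁻¹*b⁻¹ := by group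
  rw [e4, ha]; group

lemma step_comm_a (ha : a*a*a = 1) (hb : b*b*b = 1) (hab : a*b*a*b*a*b = 1)
    (hab2 : a*b*b*a*b*b*a*b*b = 1) :
    a * (b⁻¹*a⁻¹*b*a) = (b⁻¹*a⁻¹*b*a) * a := by
  conv_lhs => rw [step_formA a b ha hb hab hab2]
  have h : a * (a⁻¹*b⁻¹*a⁻¹*b*a⁻¹) = (b⁻¹*a⁻¹*b*a)*a*(a*a*a)⁻¹ := by group
  rw [h, ha]; group

lemma step_comm_b (ha : a*a*a = 1) (hb : b*b*b = 1) (hab : a*b*a*b*a*b = 1)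
    (hab2 : a*b*b*a*b*b*a*b*b = 1) :
    b * (b⁻¹*a⁻¹*b*a) = (b⁻¹*a⁻¹*b*a) * b := by
  conv_lhs => rw [step_formA a b ha hb hab hab2]
  conv_rhs => rw [step_formB a b ha hb hab hab2]
  have e1 : b*(a⁻¹*b⁻¹*a⁻¹*b*a⁻¹) = (b*a*b⁻¹)⁻¹*(a⁻¹*b*a⁻¹) := by group
  rw [e1, step_h5 a b hb hab]
  have e2 : (a⁻¹*b⁻¹*a⁻¹*b)⁻¹*(a⁻¹*b*a⁻¹) = (b⁻¹*a*b⁻¹)*(b*b*b)*a⁻¹ := by group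
  rw [e2, step_h4' a b hb hab2, hb]
  have e3 : (a⁻¹*b*a⁻¹)*(1:G)*a⁻¹ = a⁻¹*b*a*(a*a*a)⁻¹*b⁻¹*b := by group
  rw [e3, ha]; group

lemma pow_b_a {a b c : G} (hba : b*a = a*b*c) (hca : Commute c a) (hcb : Commute c b) :
    ∀ j i : ℕ, b^j * a^i = a^i * b^j * c^(j*i) := by
  have h1 : ∀ i : ℕ, b * a^i = a^i * b * c^i := by
    intro i; induction i with
    | zero => simp
    | succ n ih =>
      calc b*a^(n+1) = (b*a^n)*a := by rw [pow_succ, mul_assoc]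
        _ = (a^n*b*c^n)*a := by rw [ih]
        _ = a^n*b*(c^n*a) := by simp only [mul_assoc]
        _ = a^n*b*(a*c^n) := by rw [(hca.pow_left n).eq]
        _ = a^n*((b*a)*c^n) := by simp only [mul_assoc]
        _ = a^n*((a*b*c)*c^n) := by rw [hba]
        _ = a^(n+1)*b*c^(n+1) := by rw [pow_succ a n, pow_succ' c n]; simp only [mul_assoc]
  intro j i; induction j with
  | zero => simp
  | succ n ih =>
    calc b^(n+1)*a^i = b^n*(b*a^i) := by rw [pow_succ, mul_assoc]
      _ = b^n*(a^i*b*c^i) := by rw [h1]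
      _ = (b^n*a^i)*(b*c^i) := by simp only [mul_assoc]
      _ = (a^i*b^n*c^(n*i))*(b*c^i) := by rw [ih]
      _ = a^i*b^n*((c^(n*i)*b)*c^i) := by simp only [mul_assoc]
      _ = a^i*b^n*((b*c^(n*i))*c^i) := by rw [(hcb.pow_left (n*i)).eq]
      _ = a^i*(b^n*b)*(c^(n*i)*c^i) := by simp only [mul_assoc]
      _ = a^i*b^(n+1)*c^((n+1)*i) := by
          rw [← pow_succ, ← pow_add]
          ring_nf

lemma sort_words {a b c : G} (hba : b*a = a*b*c) (hca : Commute c a) (hcb : Commute c b)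
    (i j k i' j' k' : ℕ) :
    (a^i*b^j*c^k)*(a^i'*b^j'*c^k') = a^(i+i')*b^(j+j')*c^(k+k'+j*i') := by
  calc (a^i*b^j*c^k)*(a^i'*b^j'*c^k')
      = a^i*b^j*((c^k*a^i')*(b^j'*c^k')) := by simp only [mul_assoc]
    _ = a^i*b^j*((a^i'*c^k)*(b^j'*c^k')) := by rw [(hca.pow_pow k i').eq]
    _ = a^i*((b^j*a^i')*(c^k*b^j'*c^k')) := by simp only [mul_assoc]
    _ = a^i*((a^i'*b^j*c^(j*i'))*(c^k*b^j'*c^k')) := by rw [pow_b_a hba hca hcb]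
    _ = a^i*(a^i'*(b^j*(c^(j*i')*(c^k*b^j')*c^k'))) := by simp only [mul_assoc]
    _ = a^i*(a^i'*(b^j*(c^(j*i')*(b^j'*c^k)*c^k'))) := by rw [(hcb.pow_pow k j').eq]
    _ = a^i*(a^i'*(b^j*((c^(j*i')*b^j')*(c^k*c^k')))) := by simp only [mul_assoc]
    _ = a^i*(a^i'*(b^j*((b^j'*c^(j*i'))*(c^k*c^k')))) := by rw [(hcb.pow_pow (j*i') j').eq]
    _ = (a^i*a^i')*((b^j*b^j')*(c^(j*i')*(c^k*c^k'))) := by simp only [mul_assoc]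
    _ = a^(i+i')*b^(j+j')*c^(k+k'+j*i') := by
        rw [← pow_add, ← pow_add, ← pow_add, ← pow_add]
        simp only [mul_assoc]
        ring_nf

end Relations

/-! ### The presented group -/

def rels3 : Set (FreeGroup (Fin 2)) :=
  {(FreeGroup.of 0) ^ 3, (FreeGroup.of 1) ^ 3, (FreeGroup.of 0 * FreeGroup.of 1) ^ 3,
    (FreeGroup.of 0 * FreeGroup.of 1 ^ 2) ^ 3}

abbrev Burnside (n : ℕ) : Type :=
  PresentedGroup (Set.range fun x : FreeGroup (Fin n) => x ^ 3)

namespace Stmt3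

local notation "G3" => PresentedGroup rels3

noncomputable def aa : G3 := PresentedGroup.of 0
noncomputable def bb : G3 := PresentedGroup.of 1
noncomputable def cc : G3 := bb⁻¹*aa⁻¹*bb*aa

lemma rel_one : ∀ r ∈ rels3, PresentedGroup.mk rels3 r = 1 := fun _ hr =>
  (QuotientGroup.eq_one_iff _).2 (Subgroup.subset_normalClosure hr)

lemma ha3 : aa^3 = 1 := by
  have := rel_one _ (show (FreeGroup.of 0)^3 ∈ rels3 by simp [rels3])
  rwa [map_pow] at this

lemma hb3 : bb^3 = 1 := by
  have := rel_one _ (show (FreeGroup.of 1)^3 ∈ rels3 by simp [rels3])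
  rwa [map_pow] at this

lemma hab3 : (aa*bb)^3 = 1 := by
  have := rel_one _ (show (FreeGroup.of 0 * FreeGroup.of 1)^3 ∈ rels3 by simp [rels3])
  rwa [map_pow, map_mul] at this

lemma hab23 : (aa*bb^2)^3 = 1 := by
  have := rel_one _ (show (FreeGroup.of 0 * FreeGroup.of 1^2)^3 ∈ rels3 by simp [rels3])
  rwa [map_pow, map_mul, map_pow] at this

lemma ha3' : aa*aa*aa = 1 := by rw [← ha3, pow_three']
lemma hb3' : bb*bb*bb = 1 := by rw [← hb3, pow_three']
lemma hab3' : aa*bb*aa*bb*aa*bb = 1 := by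
  rw [← hab3, pow_three']; simp only [mul_assoc]
lemma hab23' : aa*bb*bb*aa*bb*bb*aa*bb*bb = 1 := by
  rw [← hab23, pow_three', pow_two]; simp only [mul_assoc]

lemma hba_c : bb*aa = aa*bb*cc := by rw [cc]; group
lemma hca : Commute cc aa :=
  (step_comm_a aa bb ha3' hb3' hab3' hab23').symm
lemma hcb : Commute cc bb :=
  (step_comm_b aa bb ha3' hb3' hab3' hab23').symm

lemma pow_mod3 {H : Type*} [Group H] {x : H} (h : x^3 = 1) (n : ℕ) : x^(n % 3) = x^n := by
  conv_rhs => rw [← Nat.div_add_mod n 3]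
  rw [pow_add, pow_mul, h, one_pow, one_mul]

lemma pow_of_mod3_eq {H : Type*} [Group H] {x : H} (h : x^3 = 1) {n m : ℕ}
    (e : n % 3 = m % 3) : x^n = x^m := by
  rw [← pow_mod3 h n, e, pow_mod3 h m]

lemma hc3 : cc^3 = 1 := by
  have e1 : (aa^(1:ℕ)*bb^(1:ℕ)*cc^(0:ℕ))*(aa^(1:ℕ)*bb^(1:ℕ)*cc^(0:ℕ))
      = aa^(2:ℕ)*bb^(2:ℕ)*cc^(1:ℕ) := sort_words hba_c hca hcb 1 1 0 1 1 0
  have e2 : (aa^(2:ℕ)*bb^(2:ℕ)*cc^(1:ℕ))*(aa^(1:ℕ)*bb^(1:ℕ)*cc^(0:ℕ))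
      = aa^(3:ℕ)*bb^(3:ℕ)*cc^(3:ℕ) := by
    have := sort_words hba_c hca hcb 2 2 1 1 1 0
    simpa using this
  have e3 : (aa*bb)^3 = aa^(3:ℕ)*bb^(3:ℕ)*cc^(3:ℕ) := by
    rw [pow_three']
    rw [show aa*bb = aa^(1:ℕ)*bb^(1:ℕ)*cc^(0:ℕ) by simp]
    rw [e1, e2]
  rw [hab3, ha3, hb3, one_mul, one_mul] at e3
  exact e3.symm

/-- The classifying map from the Heisenberg group onto the presented group. -/
noncomputable def sig : Hsn27 →* G3 where
  toFun p := aa ^ p.x.val * bb ^ p.y.val * cc ^ p.z.val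
  map_one' := by simp [Hsn27.one_def]
  map_mul' p q := by
    show aa ^ ((p.x + q.x).val) * bb ^ ((p.y + q.y).val) * cc ^ ((p.z + q.z + p.y*q.x).val)
      = (aa ^ p.x.val * bb ^ p.y.val * cc ^ p.z.val) * (aa ^ q.x.val * bb ^ q.y.val * cc ^ q.z.val)
    rw [sort_words hba_c hca hcb]
    congr 1
    · congr 1
      · exact pow_of_mod3_eq ha3 (by rw [ZMod.val_add]; omega)
      · exact pow_of_mod3_eq hb3 (by rw [ZMod.val_add]; omega)
    · refine pow_of_mod3_eq hc3 ?_
      rw [ZMod.val_add, ZMod.val_add, ZMod.val_mul]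
      generalize p.y.val * q.x.val = t
      omega

lemma sig_surjective : Function.Surjective sig := by
  intro x
  have : x ∈ sig.range := by
    refine PresentedGroup.generated_by rels3 sig.range (fun j => ?_) x
    fin_cases j
    · exact ⟨⟨1, 0, 0⟩, by simp [sig]; rfl⟩
    · exact ⟨⟨0, 1, 0⟩, by simp [sig]; rfl⟩
  exact this

lemma exp3G : ∀ g : G3, g^3 = 1 := by
  intro g
  obtain ⟨p, rfl⟩ := sig_surjective g
  rw [← map_pow, Hsn27.exp3, map_one]

def AA : Hsn27 := ⟨1, 0, 0⟩
def BB : Hsn27 := ⟨0, 1, 0⟩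
def CC : Hsn27 := ⟨0, 0, 1⟩

def fgen : Fin 2 → Hsn27 := fun i => if i = 0 then AA else BB

lemma frels : ∀ r ∈ rels3, FreeGroup.lift fgen r = 1 := by
  intro r hr
  simp only [rels3, Set.mem_insert_iff, Set.mem_singleton_iff] at hr
  rcases hr with rfl | rfl | rfl | rfl <;>
    simp only [map_pow, map_mul, FreeGroup.lift_apply_of] <;> decide

noncomputable def phi : G3 →* Hsn27 := PresentedGroup.toGroup frels

lemma phi_aa : phi aa = AA := PresentedGroup.toGroup.of frels
lemma phi_bb : phi bb = BB := PresentedGroup.toGroup.of frels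
lemma phi_cc : phi cc = CC := by
  rw [cc, map_mul, map_mul, map_mul, map_inv, map_inv, phi_aa, phi_bb]
  decide

lemma phi_sig : ∀ p : Hsn27, phi (sig p) = p := by
  intro p
  show phi (aa ^ p.x.val * bb ^ p.y.val * cc ^ p.z.val) = p
  rw [map_mul, map_mul, map_pow, map_pow, map_pow, phi_aa, phi_bb, phi_cc]
  have key : ∀ q : Hsn27, AA ^ q.x.val * BB ^ q.y.val * CC ^ q.z.val = q := by decide
  exact key p

end Stmt3

namespace Stmt3

local notation "G3" => PresentedGroup rels3

lemma sig_injective : Function.Injective sig :=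
  Function.LeftInverse.injective phi_sig

/-- The presented group is isomorphic to the Heisenberg group of order 27. -/
noncomputable def heisEquiv : Hsn27 ≃* G3 :=
  MulEquiv.ofBijective sig ⟨sig_injective, sig_surjective⟩

lemma lift_of_eq_mk :
    FreeGroup.lift (fun i : Fin 2 => (PresentedGroup.of i : Burnside 2))
      = PresentedGroup.mk _ := by
  ext i
  simp [PresentedGroup.of]

lemma cube_one (x : FreeGroup (Fin 2)) :
    PresentedGroup.mk (Set.range fun x : FreeGroup (Fin 2) => x ^ 3) (x^3) = 1 :=
  (QuotientGroup.eq_one_iff _).2 (Subgroup.subset_normalClosure ⟨x, rfl⟩)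

lemma hu : ∀ r ∈ rels3,
    FreeGroup.lift (fun i : Fin 2 => (PresentedGroup.of i : Burnside 2)) r = 1 := by
  intro r hr
  rw [lift_of_eq_mk]
  simp only [rels3, Set.mem_insert_iff, Set.mem_singleton_iff] at hr
  rcases hr with rfl | rfl | rfl | rfl <;> exact cube_one _

lemma hv : ∀ r ∈ (Set.range fun x : FreeGroup (Fin 2) => x ^ 3),
    FreeGroup.lift (fun i : Fin 2 => (PresentedGroup.of i : G3)) r = 1 := by
  rintro r ⟨x, rfl⟩
  rw [map_pow]
  exact exp3G _

noncomputable def uHom : G3 →* Burnside 2 := PresentedGroup.toGroup hu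
noncomputable def vHom : Burnside 2 →* G3 := PresentedGroup.toGroup hv

lemma vu : vHom.comp uHom = MonoidHom.id G3 := by
  ext i
  simp [uHom, vHom, PresentedGroup.toGroup.of]

lemma uv : uHom.comp vHom = MonoidHom.id (Burnside 2) := by
  ext i
  simp [uHom, vHom, PresentedGroup.toGroup.of]

noncomputable def burnsideEquiv : G3 ≃* Burnside 2 :=
  MonoidHom.toMulEquiv uHom vHom vu uv

end Stmt3

/-- The group `⟨a, b | a^3 = b^3 = (ab)^3 = (ab^2)^3 = 1⟩` is finite; in fact it is
isomorphic to the free Burnside group `B(2,3)` of exponent 3 on two generators, and has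
order 27. -/
theorem stmt_3 :
    Finite (PresentedGroup rels3) ∧
    Nonempty (PresentedGroup rels3 ≃* Burnside 2) ∧
    Nat.card (PresentedGroup rels3) = 27 := by
  refine ⟨?_, ⟨Stmt3.burnsideEquiv⟩, ?_⟩
  · exact Finite.of_surjective _ Stmt3.sig_surjective
  · rw [← Nat.card_congr Stmt3.heisEquiv.toEquiv, Hsn27.card27]
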